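/- Write r = q/p in lowest terms. If v is a nonempty cyclically reduced, cyclically alternating word in F which represents the trivial element of the 2-bridge link group G(K(r)) = ⟨a, b | u_r⟩ (the quotient of F by the normal closure of u_r), then the length of v satisfies |v| > |u_r|/2 = p. -/

import Mathlib

/- Formalization of statements from "Homotopically equivalent simple loops on
2-bridge spheres in Heckoid orbifolds for 2-bridge links (II)" by Lee-Sakuma.

We work in the free group `F` on two generators `a = gen 0`, `b = gen 1`.
For a rational `s` (in lowest terms `q/p`, with `0 ≤ s ≤ 1`), `uWord s` is the
word `u_s = a b^{ε₁} a^{ε₂} ⋯ b^{ε_{2p-1}}` with `ε_i = (-1)^⌊i·s⌋`.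
`CS s` is (a linear representative of) the cyclic sequence of lengths of
maximal constant-sign runs of exponents of `u_s`; since `u_s` begins with a
positive letter and (for `0 < s ≤ 1`) ends with a negative letter, the linear
run-length sequence represents the cyclic one.  `CyclicContains L T` says the
cyclic sequence represented by `L` contains `T` as a block of consecutive
terms.  `cfQ [m₁,…,m_k]` is the continued fraction `1/(m₁+1/(m₂+⋯+1/m_k))`.
`memI1 M n s` / `memI2 M n s` express `s ∈ I₁(r;n)` / `s ∈ I₂(r;n)` where
`r = cfQ M`, and `memI1hat` / `memI2hat` express `s ∈ I₁(r)` / `s ∈ I₂(r)`.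
The Heckoid group `Heck(r;n) = ⟨a,b | u_r^n⟩` is the quotient of `F` by the
normal closure `heckN r n` of `u_r^n`, with quotient map `heckQ r n`. -/

namespace Heckoid

abbrev F : Type := FreeGroup (Fin 2)

/-- The generators: `gen 0 = a`, `gen 1 = b` (and `gen i` depends on parity). -/
def gen (i : ℕ) : F := FreeGroup.of ⟨i % 2, Nat.mod_lt _ (by norm_num)⟩

/-- The word `u_s = a b^{ε₁} a^{ε₂} b^{ε₃} ⋯ a^{ε_{2p-2}} b^{ε_{2p-1}}`,
where `s = q/p` in lowest terms and `ε_i = (-1)^⌊iq/p⌋`. -/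
def uWord (s : ℚ) : F :=
  ((List.range (2 * s.den)).map
    (fun i => gen i ^ ((-1 : ℤ) ^ (⌊(i : ℚ) * s⌋.toNat)))).prod

/-- The sequence of exponent signs `ε₀, ε₁, …, ε_{2p-1}` of `u_s`. -/
def signList (s : ℚ) : List ℤ :=
  (List.range (2 * s.den)).map (fun i => (-1 : ℤ) ^ (⌊(i : ℚ) * s⌋.toNat))

/-- Lengths of the maximal runs of equal consecutive entries. -/
def runLengths {α : Type} [BEq α] (l : List α) : List ℕ :=
  (l.splitBy (· == ·)).map List.length

/-- `CS s = CS(u_s)`: the cyclic sequence of lengths of maximal constant-sign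
runs of `u_s`, represented by a list. -/
def CS (s : ℚ) : List ℕ := runLengths (signList s)

/-- The cyclic sequence represented by `L` contains `T` as a block of
consecutive terms. -/
def CyclicContains (L T : List ℕ) : Prop := ∃ k, T <+: L.rotate k

/-- The continued fraction `[m₁, m₂, …, m_k] = 1/(m₁+1/(m₂+⋯+1/m_k))`. -/
def cfQ : List ℕ → ℚ
  | [] => 0
  | a :: l => 1 / ((a : ℚ) + cfQ l)

/-- `d⟨T, T'⟩`: `d` consecutive repetitions of the concatenation of `T` and `T'`. -/
def rep2 (d : ℕ) (T T' : List ℕ) : List ℕ := (List.replicate d (T ++ T')).flatten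

/-- `s ∈ I₁(r;n)` where `r = cfQ M`:  `[0, [m₁,…,m_{k-1},m_k-1,2]]` for `k` even,
`[0, [m₁,…,m_k,2n-2])` for `k` odd. -/
def memI1 (M : List ℕ) (n : ℕ) (s : ℚ) : Prop :=
  if Even M.length then 0 ≤ s ∧ s ≤ cfQ (M.dropLast ++ [M.getLast! - 1, 2])
  else 0 ≤ s ∧ s < cfQ (M ++ [2 * n - 2])

/-- `s ∈ I₂(r;n)` where `r = cfQ M`: `([m₁,…,m_k,2n-2], 1]` for `k` even,
`[[m₁,…,m_{k-1},m_k-1,2], 1]` for `k` odd. -/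
def memI2 (M : List ℕ) (n : ℕ) (s : ℚ) : Prop :=
  if Even M.length then cfQ (M ++ [2 * n - 2]) < s ∧ s ≤ 1
  else cfQ (M.dropLast ++ [M.getLast! - 1, 2]) ≤ s ∧ s ≤ 1

/-- `s ∈ I₁(r)` where `r = cfQ M`. -/
def memI1hat (M : List ℕ) (s : ℚ) : Prop :=
  if Even M.length then 0 ≤ s ∧ s ≤ cfQ (M.dropLast ++ [M.getLast! - 1])
  else 0 ≤ s ∧ s ≤ cfQ M.dropLast

/-- `s ∈ I₂(r)` where `r = cfQ M`. -/
def memI2hat (M : List ℕ) (s : ℚ) : Prop :=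
  if Even M.length then cfQ M.dropLast ≤ s ∧ s ≤ 1
  else cfQ (M.dropLast ++ [M.getLast! - 1]) ≤ s ∧ s ≤ 1

/-- A word is cyclically alternating: reading cyclically, consecutive letters
involve different generators. -/
def CycAlternating (w : List (Fin 2 × Bool)) : Prop :=
  ∀ i : Fin w.length,
    (w.get i).1 ≠ (w.get ⟨(i.val + 1) % w.length, Nat.mod_lt _ i.pos⟩).1

/-- A word is cyclically reduced: all of its cyclic permutations are reduced. -/
def CycReduced (w : List (Fin 2 × Bool)) : Prop :=
  ∀ k, FreeGroup.reduce (w.rotate k) = w.rotate k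

end Heckoid

/-!
Send `a` and `b` to the reflections `sr 0` and `sr 1` of the dihedral group `D_p` of order `2p`.
The images are involutions, so exponents do not matter, and a cyclically alternating word of
length `2l` maps to `(sr i * sr j)^l` with `{i, j} = {0, 1}`, the rotation `r (±l)`, which is
trivial iff `p ∣ l`. Since `u_r` has length `2p`, the map factors through `G(K(r))`, so a
nonempty such word that is trivial in `G(K(r))` has length at least `2p`.
-/

open DihedralGroup

theorem List.prod_map_range_two_mul_of_periodic {M : Type*} [Monoid M] {g : ℕ → M}
    (hg : ∀ i, g (i + 2) = g i) (l : ℕ) :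
    ((List.range (2 * l)).map g).prod = (g 0 * g 1) ^ l := by
  have hshift : ∀ k i, g (2 * k + i) = g i := by
    intro k i
    induction k with
    | zero => simp
    | succ k ih => rw [← ih, show 2 * (k + 1) + i = 2 * k + i + 2 by ring, hg]
  induction l with
  | zero => simp
  | succ l ih =>
    rw [show 2 * (l + 1) = 2 * l + 1 + 1 by ring, List.range_succ, List.range_succ]
    simp only [List.map_append, List.prod_append, ih, List.map_cons, List.map_nil,
      List.prod_cons, List.prod_nil, mul_one, mul_assoc, pow_succ]
    rw [← add_zero (2 * l), hshift, add_zero, hshift]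

theorem List.map_eq_map_range_getElem_mod {α β : Type*} (f : α → β) {l : List α}
    (hpos : 0 < l.length) :
    l.map f = (List.range l.length).map fun i => f (l[i % l.length]'(Nat.mod_lt _ hpos)) :=
  List.ext_getElem (by simp) fun i _ hi => by simp [Nat.mod_eq_of_lt (by simpa using hi)]

theorem DihedralGroup.orderOf_sr_mul_sr_of_ne {p : ℕ} {a b : Fin 2} (h : a ≠ b) :
    orderOf (sr (a.val : ZMod p) * sr b.val) = p := by
  fin_cases a <;> fin_cases b <;> simp at h
  · simp [sr_mul_sr, orderOf_r_one]
  · simp [sr_mul_sr, ← inv_r, orderOf_r_one]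

section AlternatingSequence

variable {c : ℕ → Fin 2}

theorem apply_add_two_of_succ_ne (h : ∀ i, c (i + 1) ≠ c i) (i : ℕ) : c (i + 2) = c i := by
  have h₁ : c (i + 2) ≠ c (i + 1) := h (i + 1)
  have h₀ := h i
  omega

theorem apply_eq_apply_zero_iff_even_of_succ_ne (h : ∀ i, c (i + 1) ≠ c i) (i : ℕ) :
    c i = c 0 ↔ Even i := by
  induction i with
  | zero => simp
  | succ i ih =>
    have := h i
    rw [Nat.even_add_one, ← ih]
    omega

end AlternatingSequence

namespace Heckoid

def dihedralRep (p : ℕ) : F →* DihedralGroup p :=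
  FreeGroup.lift fun c => sr (c.val : ZMod p)

theorem dihedralRep_mk (p : ℕ) (v : List (Fin 2 × Bool)) :
    dihedralRep p (FreeGroup.mk v) = (v.map fun x => sr (x.1.val : ZMod p)).prod := by
  rw [dihedralRep, FreeGroup.lift_mk]
  congr 1
  refine List.map_congr_left fun x _ => ?_
  cases x.2 <;> simp [inv_sr]

theorem dihedralRep_uWord (s : ℚ) : dihedralRep s.den (uWord s) = 1 := by
  have hletter : ∀ i : ℕ, dihedralRep s.den (gen i ^ ((-1 : ℤ) ^ (⌊(i : ℚ) * s⌋.toNat)))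
      = sr ((i % 2 : ℕ) : ZMod s.den) := by
    intro i
    rcases Nat.even_or_odd (⌊(i : ℚ) * s⌋.toNat) with h | h <;>
      simp [h.neg_one_pow, gen, dihedralRep, inv_sr]
  rw [uWord, map_list_prod, List.map_map]
  simp only [Function.comp_def, hletter]
  rw [List.prod_map_range_two_mul_of_periodic (by simp)]
  simp [sr_mul_sr]

section CycAlternating

variable {v : List (Fin 2 × Bool)}

theorem CycAlternating.fst_getElem_mod_succ_ne (hv : CycAlternating v) (hpos : 0 < v.length)
    (i : ℕ) :
    (v[(i + 1) % v.length]'(Nat.mod_lt _ hpos)).1 ≠ (v[i % v.length]'(Nat.mod_lt _ hpos)).1 := by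
  have := hv ⟨i % v.length, Nat.mod_lt _ hpos⟩
  simp only [List.get_eq_getElem, Nat.mod_add_mod] at this
  exact this.symm

theorem CycAlternating.even_length (hv : CycAlternating v) (hpos : 0 < v.length) :
    Even v.length := by
  let c : ℕ → Fin 2 := fun i => (v[i % v.length]'(Nat.mod_lt _ hpos)).1
  exact (apply_eq_apply_zero_iff_even_of_succ_ne (c := c) (hv.fst_getElem_mod_succ_ne hpos)
    v.length).mp (by simp [c])

theorem dihedralRep_mk_of_cycAlternating (p : ℕ) (hv : CycAlternating v) (hpos : 0 < v.length)
    {l : ℕ} (hl : v.length = 2 * l) :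
    ∃ a b : Fin 2, a ≠ b ∧
      dihedralRep p (FreeGroup.mk v) = (sr (a.val : ZMod p) * sr b.val) ^ l := by
  let c : ℕ → Fin 2 := fun i => (v[i % v.length]'(Nat.mod_lt _ hpos)).1
  have hne : ∀ i, c (i + 1) ≠ c i := hv.fst_getElem_mod_succ_ne hpos
  refine ⟨c 0, c 1, (hne 0).symm, ?_⟩
  rw [dihedralRep_mk, List.map_eq_map_range_getElem_mod _ hpos,
    show List.range v.length = List.range (2 * l) from congrArg _ hl]
  exact List.prod_map_range_two_mul_of_periodic (g := fun i => sr ((c i).val : ZMod p))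
    (fun i => congrArg (fun x : Fin 2 => sr (x.val : ZMod p)) (apply_add_two_of_succ_ne hne i)) l

end CycAlternating

theorem statement16_general
    (r : ℚ)
    (v : List (Fin 2 × Bool)) (hvne : v ≠ [])
    (hvalt : CycAlternating v)
    (hvtriv : FreeGroup.mk v ∈ Subgroup.normalClosure ({uWord r} : Set F)) :
    r.den < v.length := by
  have hpos : 0 < v.length := List.length_pos_iff.mpr hvne
  have hker : Subgroup.normalClosure ({uWord r} : Set F) ≤ (dihedralRep r.den).ker :=
    Subgroup.normalClosure_le_normal (Set.singleton_subset_iff.mpr (dihedralRep_uWord r))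
  obtain ⟨l, hl⟩ := hvalt.even_length hpos
  obtain ⟨a, b, hab, hv⟩ :=
    dihedralRep_mk_of_cycAlternating r.den hvalt hpos (by omega : v.length = 2 * l)
  have hrot : (sr (a.val : ZMod r.den) * sr b.val) ^ l = 1 := hv ▸ hker hvtriv
  have hdvd : r.den ∣ l := by
    rw [← orderOf_sr_mul_sr_of_ne (p := r.den) hab]
    exact orderOf_dvd_of_pow_eq_one hrot
  have := Nat.le_of_dvd (by omega) hdvd
  omega

/-- If `v` is a nonempty cyclically reduced, cyclically alternating word
representing the trivial element of the 2-bridge link group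
`G(K(r)) = ⟨a,b | u_r⟩`, then `|v| > |u_r|/2 = p`, where `r = q/p` is in
lowest terms. -/
theorem statement16
    (M : List ℕ) (m n : ℕ) (r : ℚ)
    (hMlen : 2 ≤ M.length) (hMpos : ∀ x ∈ M, 0 < x) (hMlast : 2 ≤ M.getLast!)
    (hm : M.head? = some m) (hn : 2 ≤ n) (hr : r = cfQ M)
    (v : List (Fin 2 × Bool)) (hvne : v ≠ [])
    (hvred : CycReduced v) (hvalt : CycAlternating v)
    (hvtriv : FreeGroup.mk v ∈ Subgroup.normalClosure ({uWord r} : Set F)) :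
    r.den < v.length :=
  statement16_general r v hvne hvalt hvtriv

end Heckoid
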